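/- Let n ≥ 1 and let θ = β_{2n+1} |◇ Id_{2n+1} be the left pasting of the Stefan orbit β_{2n+1} with the identity permutation of {1,…,2n+1}. Then θ is a simple permutation of mixed order 4n+2; concretely: (i) θ maps the set {1,…,2n+1} onto the set {2n+2,…,4n+2} and maps {2n+2,…,4n+2} onto {1,…,2n+1}; (ii) θ² = β_{2n+1} ◇| β_{2n+1}; (iii) the order of θ is 4n+2. -/
import Mathlib


/-- Left pasting `α |◇ β`: the permutation of `{1,…,m+n}` with
`(α |◇ β)(i) = α(i) + n` for `1 ≤ i ≤ m` and `(α |◇ β)(m+i) = β(i)` for `1 ≤ i ≤ n`. -/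
def pasteLeft {m n : ℕ} (α : Equiv.Perm (Fin m)) (β : Equiv.Perm (Fin n)) :
    Equiv.Perm (Fin (m + n)) :=
  finSumFinEquiv.symm.trans ((Equiv.sumCongr α β).trans
    ((Equiv.sumComm (Fin m) (Fin n)).trans (finSumFinEquiv.trans (finCongr (Nat.add_comm n m)))))

/-- Right pasting `α ◇| β`: the permutation of `{1,…,m+n}` with
`(α ◇| β)(i) = α(i)` for `1 ≤ i ≤ m` and `(α ◇| β)(m+i) = β(i) + m` for `1 ≤ i ≤ n`. -/
def pasteRight {m n : ℕ} (α : Equiv.Perm (Fin m)) (β : Equiv.Perm (Fin n)) :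
    Equiv.Perm (Fin (m + n)) :=
  finSumFinEquiv.symm.trans ((Equiv.sumCongr α β).trans finSumFinEquiv)

/-- Transport a permutation of `Fin ((2n+1)+(2n+1))` to one of `Fin (4n+2)`. -/
def toPerm42 (n : ℕ) (σ : Equiv.Perm (Fin (2 * n + 1 + (2 * n + 1)))) :
    Equiv.Perm (Fin (4 * n + 2)) :=
  (finCongr (by omega : 2 * n + 1 + (2 * n + 1) = 4 * n + 2)).permCongr σ


theorem SP.pasteRight_castAdd {m n : ℕ} (α : Equiv.Perm (Fin m)) (β : Equiv.Perm (Fin n)) (i : Fin m) :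
    pasteRight α β (Fin.castAdd n i) = Fin.castAdd n (α i) := by
  simp [pasteRight]

theorem SP.pasteRight_natAdd {m n : ℕ} (α : Equiv.Perm (Fin m)) (β : Equiv.Perm (Fin n)) (j : Fin n) :
    pasteRight α β (Fin.natAdd m j) = Fin.natAdd m (β j) := by
  simp [pasteRight]

theorem SP.pasteRight_mul {m n : ℕ} (α α' : Equiv.Perm (Fin m)) (β β' : Equiv.Perm (Fin n)) :
    pasteRight α β * pasteRight α' β' = pasteRight (α * α') (β * β') := by
  simp [pasteRight, Equiv.Perm.mul_def, Equiv.trans_assoc]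
  ext x
  simp [Equiv.trans_apply]

theorem SP.pasteRight_one {m n : ℕ} :
    pasteRight (1 : Equiv.Perm (Fin m)) (1 : Equiv.Perm (Fin n)) = 1 := by
  ext x
  simp [pasteRight]

theorem SP.pasteRight_pow {m n : ℕ} (α : Equiv.Perm (Fin m)) (β : Equiv.Perm (Fin n)) (k : ℕ) :
    (pasteRight α β) ^ k = pasteRight (α ^ k) (β ^ k) := by
  induction k with
  | zero => simpa using SP.pasteRight_one.symm
  | succ k ih => rw [pow_succ, pow_succ, pow_succ, ih, SP.pasteRight_mul]

theorem SP.toPerm42_val (n : ℕ) (σ : Equiv.Perm (Fin (2 * n + 1 + (2 * n + 1))))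
    (x : Fin (4 * n + 2)) :
    ((toPerm42 n σ) x : ℕ) = (σ ⟨(x : ℕ), by omega⟩ : ℕ) := rfl

theorem SP.toPerm42_mul (n : ℕ) (σ τ : Equiv.Perm (Fin (2 * n + 1 + (2 * n + 1)))) :
    toPerm42 n (σ * τ) = toPerm42 n σ * toPerm42 n τ := by
  ext x
  simp [toPerm42, Equiv.permCongr_apply, Equiv.Perm.mul_apply]

theorem SP.toPerm42_one (n : ℕ) : toPerm42 n 1 = 1 := by
  ext x
  simp [toPerm42]

theorem SP.toPerm42_pow (n : ℕ) (σ : Equiv.Perm (Fin (2 * n + 1 + (2 * n + 1)))) (k : ℕ) :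
    toPerm42 n (σ ^ k) = (toPerm42 n σ) ^ k := by
  induction k with
  | zero => simpa using SP.toPerm42_one n
  | succ k ih => rw [pow_succ, pow_succ, SP.toPerm42_mul, ih]

theorem SP.pasteLeft_castAdd {m : ℕ} (α β : Equiv.Perm (Fin m)) (i : Fin m) :
    pasteLeft α β (Fin.castAdd m i) = Fin.natAdd m (α i) := by
  apply Fin.ext
  simp [pasteLeft]

theorem SP.pasteLeft_natAdd {m : ℕ} (α : Equiv.Perm (Fin m)) (j : Fin m) :
    pasteLeft α (1 : Equiv.Perm (Fin m)) (Fin.natAdd m j) = Fin.castAdd m j := by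
  apply Fin.ext
  simp only [pasteLeft, Equiv.trans_apply, finSumFinEquiv_symm_apply_natAdd,
    Equiv.sumCongr_apply, Sum.map_inr, id_eq, Equiv.sumComm_apply, Sum.swap_inr,
    finSumFinEquiv_apply_left, finCongr_apply, Fin.coe_cast, Fin.coe_castAdd,
    Equiv.Perm.coe_one]

/-- `θ = β_{2n+1} |◇ Id_{2n+1}` is a simple permutation of mixed order `4n+2`:
(i) `θ` maps `{1,…,2n+1}` onto `{2n+2,…,4n+2}` and vice versa;
(ii) `θ² = β_{2n+1} ◇| β_{2n+1}`; (iii) `orderOf θ = 4n+2`.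
The Stefan orbit `β = β_{2n+1}` is characterized 1-indexed by the hypotheses
(`i : Fin (2*n+1)` represents the point `(i : ℕ) + 1`). -/
theorem pasteLeft_beta_id_is_simple (n : ℕ) (hn : 1 ≤ n)
    (β : Equiv.Perm (Fin (2 * n + 1)))
    (hβ1 : ∀ i : Fin (2 * n + 1), (i : ℕ) + 1 = 1 → (β i : ℕ) + 1 = n + 1)
    (hβ2 : ∀ i : Fin (2 * n + 1), 2 ≤ (i : ℕ) + 1 → (i : ℕ) + 1 ≤ n + 1 →
      (β i : ℕ) + 1 = 2 * n + 3 - ((i : ℕ) + 1))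
    (hβ3 : ∀ i : Fin (2 * n + 1), n + 2 ≤ (i : ℕ) + 1 → (i : ℕ) + 1 ≤ 2 * n + 1 →
      (β i : ℕ) + 1 = 2 * n + 2 - ((i : ℕ) + 1))
    (θ : Equiv.Perm (Fin (4 * n + 2)))
    (hθ : θ = toPerm42 n (pasteLeft β (1 : Equiv.Perm (Fin (2 * n + 1))))) :
    ⇑θ '' {x : Fin (4 * n + 2) | (x : ℕ) < 2 * n + 1} =
        {x : Fin (4 * n + 2) | 2 * n + 1 ≤ (x : ℕ)} ∧
    ⇑θ '' {x : Fin (4 * n + 2) | 2 * n + 1 ≤ (x : ℕ)} =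
        {x : Fin (4 * n + 2) | (x : ℕ) < 2 * n + 1} ∧
    θ ^ 2 = toPerm42 n (pasteRight β β) ∧
    orderOf θ = 4 * n + 2 := by
  have p0lt : 0 < 2 * n + 1 := by omega
  set p0 : Fin (2 * n + 1) := ⟨0, p0lt⟩ with hp0
  -- orbit of p0 under β
  have key : ∀ j : ℕ, j ≤ n →
      (((β ^ (2 * j + 1)) p0 : ℕ) = n - j ∧ (1 ≤ j → ((β ^ (2 * j)) p0 : ℕ) = n + j)) := by
    intro j
    induction j with
    | zero =>
      intro _
      refine ⟨?_, by omega⟩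
      have h1 := hβ1 p0 (by simp [hp0])
      rw [show (2 * 0 + 1) = 1 from rfl, pow_one]
      omega
    | succ j ih =>
      intro hj
      obtain ⟨hodd, _⟩ := ih (by omega)
      have hlt : ((β ^ (2 * j + 1)) p0 : ℕ) < 2 * n + 1 := ((β ^ (2 * j + 1)) p0).isLt
      have heven : ((β ^ (2 * (j + 1))) p0 : ℕ) = n + (j + 1) := by
        have e1 : (2 * (j + 1)) = (2 * j + 1) + 1 := by ring
        rw [e1, pow_succ', Equiv.Perm.mul_apply]
        have h2 := hβ2 ((β ^ (2 * j + 1)) p0) (by omega) (by omega)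
        omega
      refine ⟨?_, fun _ => heven⟩
      have e2 : (2 * (j + 1) + 1) = (2 * (j + 1)) + 1 := rfl
      rw [e2, pow_succ', Equiv.Perm.mul_apply]
      have h3 := hβ3 ((β ^ (2 * (j + 1))) p0) (by omega) (by omega)
      omega
  have hfix : (β ^ (2 * n + 1)) p0 = p0 := by
    have h := (key n le_rfl).1
    have hp : (p0 : ℕ) = 0 := rfl
    apply Fin.ext
    omega
  have hsurj : ∀ x : Fin (2 * n + 1), ∃ k : ℕ, (β ^ k) p0 = x := by
    intro x
    rcases le_or_gt (x : ℕ) n with hx | hx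
    · refine ⟨2 * (n - (x : ℕ)) + 1, Fin.ext ?_⟩
      have := (key (n - (x : ℕ)) (by omega)).1
      omega
    · refine ⟨2 * ((x : ℕ) - n), Fin.ext ?_⟩
      have hx2 : (x : ℕ) < 2 * n + 1 := x.isLt
      have := (key ((x : ℕ) - n) (by omega)).2 (by omega)
      omega
  have hβpow : β ^ (2 * n + 1) = 1 := by
    ext x
    obtain ⟨k, hk⟩ := hsurj x
    simp only [Equiv.Perm.one_apply]
    rw [← hk, ← Equiv.Perm.mul_apply, pow_mul_comm, Equiv.Perm.mul_apply, hfix]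
  have hne : ∀ k : ℕ, 1 ≤ k → k ≤ 2 * n → (β ^ k) p0 ≠ p0 := by
    intro k hk1 hk2 hcon
    have hval : ((β ^ k) p0 : ℕ) = 0 := by rw [hcon]
    rcases Nat.even_or_odd k with ⟨j, hj⟩ | ⟨j, hj⟩
    · have hj' : 1 ≤ j ∧ j ≤ n := by omega
      have := (key j hj'.2).2 hj'.1
      rw [show k = 2 * j by omega] at hval
      omega
    · have hj' : j ≤ n - 1 := by omega
      have := (key j (by omega)).1
      rw [show k = 2 * j + 1 by omega] at hval
      omega
  -- value computations for θ
  have hv1 : ∀ x : Fin (4 * n + 2), ∀ h : (x : ℕ) < 2 * n + 1,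
      (θ x : ℕ) = 2 * n + 1 + (β ⟨(x : ℕ), h⟩ : ℕ) := by
    intro x h
    rw [hθ, SP.toPerm42_val]
    have e : (⟨(x : ℕ), by omega⟩ : Fin (2 * n + 1 + (2 * n + 1))) =
        Fin.castAdd (2 * n + 1) ⟨(x : ℕ), h⟩ := rfl
    rw [e, SP.pasteLeft_castAdd]
    rfl
  have hv2 : ∀ x : Fin (4 * n + 2), 2 * n + 1 ≤ (x : ℕ) →
      (θ x : ℕ) = (x : ℕ) - (2 * n + 1) := by
    intro x h
    rw [hθ, SP.toPerm42_val]
    have e : (⟨(x : ℕ), by omega⟩ : Fin (2 * n + 1 + (2 * n + 1))) =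
        Fin.natAdd (2 * n + 1) ⟨(x : ℕ) - (2 * n + 1), by omega⟩ := by
      apply Fin.ext; simp; omega
    rw [e, SP.pasteLeft_natAdd]
    rfl
  have hmem1 : ∀ x : Fin (4 * n + 2), (x : ℕ) < 2 * n + 1 → 2 * n + 1 ≤ (θ x : ℕ) := by
    intro x h; rw [hv1 x h]; omega
  have hmem2 : ∀ x : Fin (4 * n + 2), 2 * n + 1 ≤ (x : ℕ) → (θ x : ℕ) < 2 * n + 1 := by
    intro x h; rw [hv2 x h]; have := x.isLt; omega
  -- part (i)
  have img1 : ⇑θ '' {x : Fin (4 * n + 2) | (x : ℕ) < 2 * n + 1} =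
      {x : Fin (4 * n + 2) | 2 * n + 1 ≤ (x : ℕ)} := by
    ext y
    simp only [Set.mem_image, Set.mem_setOf_eq]
    constructor
    · rintro ⟨x, hx, rfl⟩
      exact hmem1 x hx
    · intro hy
      refine ⟨θ.symm y, ?_, θ.apply_symm_apply y⟩
      by_contra hc
      push_neg at hc
      have h2 := hmem2 (θ.symm y) hc
      rw [θ.apply_symm_apply] at h2
      omega
  have img2 : ⇑θ '' {x : Fin (4 * n + 2) | 2 * n + 1 ≤ (x : ℕ)} =
      {x : Fin (4 * n + 2) | (x : ℕ) < 2 * n + 1} := by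
    ext y
    simp only [Set.mem_image, Set.mem_setOf_eq]
    constructor
    · rintro ⟨x, hx, rfl⟩
      exact hmem2 x hx
    · intro hy
      refine ⟨θ.symm y, ?_, θ.apply_symm_apply y⟩
      by_contra hc
      push_neg at hc
      have h2 := hmem1 (θ.symm y) hc
      rw [θ.apply_symm_apply] at h2
      omega
  -- part (ii)
  have hsqσ : (pasteLeft β (1 : Equiv.Perm (Fin (2 * n + 1)))) ^ 2 = pasteRight β β := by
    ext x
    refine Fin.addCases (fun i => ?_) (fun j => ?_) x
    · rw [pow_two, Equiv.Perm.mul_apply, SP.pasteLeft_castAdd, SP.pasteLeft_natAdd,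
        SP.pasteRight_castAdd]
    · rw [pow_two, Equiv.Perm.mul_apply, SP.pasteLeft_natAdd, SP.pasteLeft_castAdd,
        SP.pasteRight_natAdd]
  have hsq : θ ^ 2 = toPerm42 n (pasteRight β β) := by
    rw [hθ, ← SP.toPerm42_pow, hsqσ]
  -- even powers of θ
  have hpow2 : ∀ k : ℕ, θ ^ (2 * k) = toPerm42 n (pasteRight (β ^ k) (β ^ k)) := by
    intro k
    rw [pow_mul, hsq, ← SP.toPerm42_pow, SP.pasteRight_pow]
  -- value lemmas for toPerm42 (pasteRight γ δ)
  have hpr1 : ∀ (γ δ : Equiv.Perm (Fin (2 * n + 1))) (x : Fin (4 * n + 2))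
      (h : (x : ℕ) < 2 * n + 1),
      ((toPerm42 n (pasteRight γ δ)) x : ℕ) = (γ ⟨(x : ℕ), h⟩ : ℕ) := by
    intro γ δ x h
    rw [SP.toPerm42_val]
    have e : (⟨(x : ℕ), by omega⟩ : Fin (2 * n + 1 + (2 * n + 1))) =
        Fin.castAdd (2 * n + 1) ⟨(x : ℕ), h⟩ := rfl
    rw [e, SP.pasteRight_castAdd]
    rfl
  have hpr2 : ∀ (γ δ : Equiv.Perm (Fin (2 * n + 1))) (x : Fin (4 * n + 2)),
      2 * n + 1 ≤ (x : ℕ) → 2 * n + 1 ≤ ((toPerm42 n (pasteRight γ δ)) x : ℕ) := by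
    intro γ δ x h
    rw [SP.toPerm42_val]
    have e : (⟨(x : ℕ), by omega⟩ : Fin (2 * n + 1 + (2 * n + 1))) =
        Fin.natAdd (2 * n + 1) ⟨(x : ℕ) - (2 * n + 1), by omega⟩ := by
      apply Fin.ext; simp; omega
    rw [e, SP.pasteRight_natAdd]
    simp
  -- part (iii)
  have htop : θ ^ (4 * n + 2) = 1 := by
    have e : 4 * n + 2 = 2 * (2 * n + 1) := by ring
    have e2 : θ ^ (4 * n + 2) = θ ^ (2 * (2 * n + 1)) := congrArg (fun k => θ ^ k) e
    rw [e2, hpow2, hβpow, SP.pasteRight_one, SP.toPerm42_one]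
  have hdvd : orderOf θ ∣ 4 * n + 2 := orderOf_dvd_of_pow_eq_one htop
  have hdpos : 0 < orderOf θ := orderOf_pos θ
  have z0lt : 0 < 4 * n + 2 := by omega
  set z0 : Fin (4 * n + 2) := ⟨0, z0lt⟩ with hz0
  have hz0v : (z0 : ℕ) = 0 := rfl
  have hordθ : orderOf θ = 4 * n + 2 := by
    have hθd : θ ^ orderOf θ = 1 := pow_orderOf_eq_one θ
    rcases Nat.even_or_odd (orderOf θ) with ⟨k, hk⟩ | ⟨k, hk⟩
    · -- even
      have hk' : orderOf θ = 2 * k := by omega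
      have hkpos : 0 < k := by omega
      have hkd : k ∣ 2 * n + 1 := by
        have h2 : 2 * k ∣ 2 * (2 * n + 1) := by
          rw [← hk', show 2 * (2 * n + 1) = 4 * n + 2 from by ring]
          exact hdvd
        exact (mul_dvd_mul_iff_left (by norm_num : (2 : ℕ) ≠ 0)).1 h2
      have hkle : k ≤ 2 * n + 1 := Nat.le_of_dvd (by omega) hkd
      have hkeq : k = 2 * n + 1 := by
        by_contra hc
        have hk2n : k ≤ 2 * n := by omega
        have h1 : θ ^ (2 * k) = 1 := by rw [← hk', hθd]
        have h2 : ((θ ^ (2 * k)) z0 : ℕ) = ((β ^ k) p0 : ℕ) := by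
          rw [hpow2 k, hpr1 (β ^ k) (β ^ k) z0 (by omega)]
        have h3 : ((θ ^ (2 * k)) z0 : ℕ) = 0 := by rw [h1]; rfl
        exact hne k hkpos hk2n (Fin.ext (by omega))
      omega
    · -- odd: contradiction
      exfalso
      have hd' : orderOf θ = 2 * k + 1 := by omega
      have h1 : (θ ^ orderOf θ) z0 = (θ ^ (2 * k)) (θ z0) := by
        rw [hd', pow_succ, Equiv.Perm.mul_apply]
      have h2 : 2 * n + 1 ≤ ((θ) z0 : ℕ) := hmem1 z0 (by omega)
      have h3 : 2 * n + 1 ≤ ((θ ^ orderOf θ) z0 : ℕ) := by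
        rw [h1, hpow2 k]
        exact hpr2 (β ^ k) (β ^ k) (θ z0) h2
      rw [hθd] at h3
      have h4 : ((1 : Equiv.Perm (Fin (4 * n + 2))) z0 : ℕ) = 0 := rfl
      omega
  exact ⟨img1, img2, hsq, hordθ⟩
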